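/- arXiv:2411.05306 — 4 statements merged into one kernel-verified Lean document; each statement's English description precedes it below -/
import Mathlib

section
/- Failure of homogeneity: there exist a dual number q̇ = q_st + q_in ε with q_st, q_in nonzero and a dual real 2×2 matrix Ẋ such that v(q̇ Ẋ) < |q̇| v(Ẋ), where v(Ẋ) = ||X_st||_F + ||X_in||_F ε; specifically q̇ = 2 + 3ε and Ẋ = I + diag(2,3)ε witness v(q̇Ẋ) = 2√2 + √130 ε < 2√2 + (2√13 + 3√2)ε = |q̇| v(Ẋ). -/
open scoped Matrix

/-- Frobenius norm of a real matrix. -/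
noncomputable def frobR {m n : ℕ} (A : Matrix (Fin m) (Fin n) ℝ) : ℝ :=
  Real.sqrt (∑ i, ∑ j, (A i j) ^ 2)

/-- `v(Ẋ) = ‖X_st‖_F + ‖X_in‖_F ε` for a dual real matrix `Ẋ = X_st + X_in ε`. -/
noncomputable def vR {m n : ℕ} (X : Matrix (Fin m) (Fin n) ℝ × Matrix (Fin m) (Fin n) ℝ) :
    ℝ × ℝ :=
  (frobR X.1, frobR X.2)

/-- Strict lexicographic order on dual numbers represented as pairs. -/
def dlt (p q : ℝ × ℝ) : Prop := p.1 < q.1 ∨ (p.1 = q.1 ∧ p.2 < q.2)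

/-- Multiplication of dual numbers: `(a+bε)(c+dε) = ac + (ad+bc)ε`. -/
def dmul (p q : ℝ × ℝ) : ℝ × ℝ := (p.1 * q.1, p.1 * q.2 + p.2 * q.1)

/-- Action of a dual number on a dual matrix:
`q̇ Ẋ = q_st X_st + (q_in X_st + q_st X_in) ε`. -/
def dsmulR {m n : ℕ} (q : ℝ × ℝ) (X : Matrix (Fin m) (Fin n) ℝ × Matrix (Fin m) (Fin n) ℝ) :
    Matrix (Fin m) (Fin n) ℝ × Matrix (Fin m) (Fin n) ℝ :=
  (q.1 • X.1, q.2 • X.1 + q.1 • X.2)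

lemma sqrt8 : Real.sqrt 8 = 2 * Real.sqrt 2 := by
  rw [show (8:ℝ) = 2^2 * 2 by norm_num, Real.sqrt_mul (by positivity), Real.sqrt_sq (by norm_num)]

/-- Failure of homogeneity: the dual number `q̇ = 2 + 3ε` (with both parts nonzero)
and the dual real `2×2` matrix `Ẋ = I + diag(2,3) ε` witness
`v(q̇Ẋ) = 2√2 + √130 ε < 2√2 + (2√13 + 3√2) ε = |q̇| v(Ẋ)`. -/
theorem homogeneity_fails :
    ∃ (q : ℝ × ℝ) (X : Matrix (Fin 2) (Fin 2) ℝ × Matrix (Fin 2) (Fin 2) ℝ),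
      q = (2, 3) ∧ X = ((1 : Matrix (Fin 2) (Fin 2) ℝ), Matrix.diagonal ![2, 3]) ∧
      q.1 ≠ 0 ∧ q.2 ≠ 0 ∧
      vR (dsmulR q X) = (2 * Real.sqrt 2, Real.sqrt 130) ∧
      dmul (|q.1|, q.2) (vR X) =
        (2 * Real.sqrt 2, 2 * Real.sqrt 13 + 3 * Real.sqrt 2) ∧
      dlt (vR (dsmulR q X)) (dmul (|q.1|, q.2) (vR X)) := by
  refine ⟨(2, 3), ((1 : Matrix (Fin 2) (Fin 2) ℝ), Matrix.diagonal ![2, 3]),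
    rfl, rfl, by norm_num, by norm_num, ?_, ?_, ?_⟩
  · have h1 : vR (dsmulR ((2:ℝ), (3:ℝ))
        ((1 : Matrix (Fin 2) (Fin 2) ℝ), Matrix.diagonal ![2, 3]))
        = (Real.sqrt 8, Real.sqrt 130) := by
      simp [vR, dsmulR, frobR, Fin.sum_univ_two, Matrix.one_apply, Matrix.diagonal,
        Matrix.smul_apply, Matrix.add_apply, Matrix.of_apply]
      norm_num
      rw [sqrt8]; ring
    rw [h1, sqrt8]
  · have h2 : vR ((1 : Matrix (Fin 2) (Fin 2) ℝ), Matrix.diagonal ![2, 3])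
        = (Real.sqrt 2, Real.sqrt 13) := by
      simp [vR, frobR, Fin.sum_univ_two, Matrix.one_apply, Matrix.diagonal, Matrix.of_apply]
      norm_num
    simp [dmul, h2]
  · right
    constructor
    · have h1 : vR (dsmulR ((2:ℝ), (3:ℝ))
          ((1 : Matrix (Fin 2) (Fin 2) ℝ), Matrix.diagonal ![2, 3]))
          = (Real.sqrt 8, Real.sqrt 130) := by
        simp [vR, dsmulR, frobR, Fin.sum_univ_two, Matrix.one_apply, Matrix.diagonal,
          Matrix.smul_apply, Matrix.add_apply, Matrix.of_apply]
        norm_num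
        rw [sqrt8]; ring
      have h2 : vR ((1 : Matrix (Fin 2) (Fin 2) ℝ), Matrix.diagonal ![2, 3])
          = (Real.sqrt 2, Real.sqrt 13) := by
        simp [vR, frobR, Fin.sum_univ_two, Matrix.one_apply, Matrix.diagonal, Matrix.of_apply]
        norm_num
      simp [dmul, h1, h2, sqrt8]
    · have h1 : vR (dsmulR ((2:ℝ), (3:ℝ))
          ((1 : Matrix (Fin 2) (Fin 2) ℝ), Matrix.diagonal ![2, 3]))
          = (Real.sqrt 8, Real.sqrt 130) := by
        simp [vR, dsmulR, frobR, Fin.sum_univ_two, Matrix.one_apply, Matrix.diagonal,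
          Matrix.smul_apply, Matrix.add_apply, Matrix.of_apply]
        norm_num
        rw [sqrt8]; ring
      have h2 : vR ((1 : Matrix (Fin 2) (Fin 2) ℝ), Matrix.diagonal ![2, 3])
          = (Real.sqrt 2, Real.sqrt 13) := by
        simp [vR, frobR, Fin.sum_univ_two, Matrix.one_apply, Matrix.diagonal, Matrix.of_apply]
        norm_num
      rw [h1, h2]
      simp only [dmul]
      norm_num
      have s2 : Real.sqrt 2 ^ 2 = 2 := Real.sq_sqrt (by norm_num)
      have s13 : Real.sqrt 13 ^ 2 = 13 := Real.sq_sqrt (by norm_num)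
      have s130 : Real.sqrt 130 ^ 2 = 130 := Real.sq_sqrt (by norm_num)
      have p2 : (0:ℝ) < Real.sqrt 2 := Real.sqrt_pos.mpr (by norm_num)
      have p13 : (0:ℝ) < Real.sqrt 13 := Real.sqrt_pos.mpr (by norm_num)
      have p130 : (0:ℝ) ≤ Real.sqrt 130 := Real.sqrt_nonneg _
      have h26 : Real.sqrt 2 * Real.sqrt 13 = Real.sqrt 26 := by
        rw [← Real.sqrt_mul (by norm_num)]; norm_num
      have s26 : Real.sqrt 26 ^ 2 = 26 := Real.sq_sqrt (by norm_num)
      have p26 : (5:ℝ) < Real.sqrt 26 := by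
        nlinarith [Real.sqrt_nonneg (26:ℝ)]
      nlinarith [p26, h26, sq_nonneg (2*Real.sqrt 13 + 3*Real.sqrt 2 - Real.sqrt 130), mul_pos p2 p13]
end

section
/- Sub-homogeneity bound: for any dual quaternion matrix Ẋ = X_st + X_in ε and any dual quaternion q̇ = q_st + q_in ε, v(q̇ Ẋ) ≤ |q̇|_D v(Ẋ), where |q̇|_D = |q_st| + |q_in| ε, v(Ẋ) = ||X_st||_F + ||X_in||_F ε, and the inequality is in the lexicographic order on dual numbers. -/
open scoped Quaternion Matrix

/-- Frobenius norm of a quaternion matrix. -/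
noncomputable def frobQ {m n : ℕ} (A : Matrix (Fin m) (Fin n) ℍ[ℝ]) : ℝ :=
  Real.sqrt (∑ i, ∑ j, ‖A i j‖ ^ 2)

/-- Lexicographic order `≤` on dual numbers represented as pairs. -/
def dle (p q : ℝ × ℝ) : Prop := p.1 < q.1 ∨ (p.1 = q.1 ∧ p.2 ≤ q.2)

/-- `v(Ẋ) = ‖X_st‖_F + ‖X_in‖_F ε` for a dual quaternion matrix. -/
noncomputable def vQ {m n : ℕ}
    (X : Matrix (Fin m) (Fin n) ℍ[ℝ] × Matrix (Fin m) (Fin n) ℍ[ℝ]) : ℝ × ℝ :=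
  (frobQ X.1, frobQ X.2)

/-- Action of a dual quaternion scalar on a dual quaternion matrix:
`q̇ Ẋ = q_st X_st + (q_in X_st + q_st X_in) ε`. -/
noncomputable def dsmulQ {m n : ℕ} (q : ℍ[ℝ] × ℍ[ℝ])
    (X : Matrix (Fin m) (Fin n) ℍ[ℝ] × Matrix (Fin m) (Fin n) ℍ[ℝ]) :
    Matrix (Fin m) (Fin n) ℍ[ℝ] × Matrix (Fin m) (Fin n) ℍ[ℝ] :=
  (q.1 • X.1, q.2 • X.1 + q.1 • X.2)

section Frobenius

attribute [local instance] Matrix.frobeniusNormedAddCommGroup Matrix.frobeniusNormSMulClass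

lemma frobQ_eq_norm {m n : ℕ} (A : Matrix (Fin m) (Fin n) ℍ[ℝ]) : frobQ A = ‖A‖ := by
  simp only [frobQ, Matrix.frobenius_norm_def, Real.rpow_two, Real.sqrt_eq_rpow]

lemma frobQ_smul {m n : ℕ} (q : ℍ[ℝ]) (A : Matrix (Fin m) (Fin n) ℍ[ℝ]) :
    frobQ (q • A) = ‖q‖ * frobQ A := by
  simp only [frobQ_eq_norm, norm_smul]

lemma frobQ_add_le {m n : ℕ} (A B : Matrix (Fin m) (Fin n) ℍ[ℝ]) :
    frobQ (A + B) ≤ frobQ A + frobQ B := by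
  simp only [frobQ_eq_norm, norm_add_le]

end Frobenius

/-- Sub-homogeneity bound: `v(q̇ Ẋ) ≤ |q̇|_D v(Ẋ)` in the lexicographic order,
where `|q̇|_D = |q_st| + |q_in| ε`. -/
theorem v_dsmul_le {m n : ℕ} (q : ℍ[ℝ] × ℍ[ℝ])
    (X : Matrix (Fin m) (Fin n) ℍ[ℝ] × Matrix (Fin m) (Fin n) ℍ[ℝ]) :
    dle (vQ (dsmulQ q X)) (dmul (‖q.1‖, ‖q.2‖) (vQ X)) := by
  refine Or.inr ⟨frobQ_smul q.1 X.1, ?_⟩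
  calc frobQ (q.2 • X.1 + q.1 • X.2)
      ≤ frobQ (q.2 • X.1) + frobQ (q.1 • X.2) := frobQ_add_le _ _
    _ = ‖q.1‖ * frobQ X.2 + ‖q.2‖ * frobQ X.1 := by rw [frobQ_smul, frobQ_smul, add_comm]
end

section
/- Frobenius norm of a dual quaternion matrix with nonzero standard part: if Ȧ = A_st + A_in ε with A_st ≠ 0, then ||Ȧ||_F = ||A_st||_F + (⟨A_st, A_in⟩_R / ||A_st||_F) ε, as dual numbers. -/
open scoped Quaternion Matrix

/-- The real-valued inner product `⟨A,B⟩_R = (1/2)(⟨A,B⟩ + ⟨B,A⟩)`. -/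
noncomputable def innerR {m n : ℕ} (A B : Matrix (Fin m) (Fin n) ℍ[ℝ]) : ℝ :=
  ∑ i, ∑ j, (star (B i j) * A i j).re

/-- The square of the magnitude of a dual quaternion `ȧ = a + bε`, a dual number:
`|ȧ|² = |a|² + 2 re(a b̄) ε`. -/
noncomputable def dmagSq (a : ℍ[ℝ] × ℍ[ℝ]) : ℝ × ℝ :=
  (‖a.1‖ ^ 2, 2 * (a.1 * star a.2).re)

/-- The square root of a dual number with positive standard part:
`sqrt(s + tε) = √s + (t/(2√s)) ε`. -/
noncomputable def dsqrt (s : ℝ × ℝ) : ℝ × ℝ :=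
  (Real.sqrt s.1, s.2 / (2 * Real.sqrt s.1))

/-- The dual-number Frobenius norm of a dual quaternion matrix with appreciable
standard part, computed entrywise in dual arithmetic:
`‖Ȧ‖_F = sqrt(Σ_{i,j} |ȧ_{ij}|²)`. -/
noncomputable def dualFrob {m n : ℕ}
    (A : Matrix (Fin m) (Fin n) ℍ[ℝ] × Matrix (Fin m) (Fin n) ℍ[ℝ]) : ℝ × ℝ :=
  dsqrt (∑ i, ∑ j, dmagSq (A.1 i j, A.2 i j))

/-- Frobenius norm of a dual quaternion matrix with nonzero standard part:
if `Ȧ = A_st + A_in ε` with `A_st ≠ 0`, then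
`‖Ȧ‖_F = ‖A_st‖_F + (⟨A_st, A_in⟩_R / ‖A_st‖_F) ε`. -/
theorem dualFrob_eq {m n : ℕ}
    (A : Matrix (Fin m) (Fin n) ℍ[ℝ] × Matrix (Fin m) (Fin n) ℍ[ℝ])
    (hA : A.1 ≠ 0) :
    dualFrob A = (frobQ A.1, innerR A.1 A.2 / frobQ A.1) := by
  have hfst : (∑ i, ∑ j, dmagSq (A.1 i j, A.2 i j)).1 = ∑ i, ∑ j, ‖A.1 i j‖ ^ 2 := by
    simp [dmagSq, Prod.fst_sum]
  have hsnd : (∑ i, ∑ j, dmagSq (A.1 i j, A.2 i j)).2 = 2 * innerR A.1 A.2 := by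
    simp only [Prod.snd_sum, dmagSq, innerR, Finset.mul_sum]
    refine Finset.sum_congr rfl fun i _ => Finset.sum_congr rfl fun j _ => ?_
    congr 1
    simp [Quaternion.re_mul, Quaternion.re_star, Quaternion.imI_star, Quaternion.imJ_star, Quaternion.imK_star]
    ring
  unfold dualFrob dsqrt frobQ
  rw [hfst, hsnd]
  refine Prod.ext rfl ?_
  simp only
  rw [show (2 : ℝ) * Real.sqrt (∑ i, ∑ j, ‖A.1 i j‖ ^ 2)
      = 2 * Real.sqrt (∑ i, ∑ j, ‖A.1 i j‖ ^ 2) from rfl,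
    mul_div_mul_left _ _ (two_ne_zero)]
end

section
/- Positive definiteness of the block matrix P: if positive reals τ_X, τ_W, γ, ρ satisfy γ(τ_X+ρ) > 1, γτ_W > 1, and 2 − γ − 2γρ > 0, then the Hermitian quaternion block matrix P = [[(τ_X+ρ)I_n, 0, (1/γ)I_n], [0, τ_W I_{2n} + ρH*H, (1/γ)H*], [(1/γ)I_n, (1/γ)H, ((2−γ)/(γ^2ρ))I_n]] is positive definite, where H = [I_n, O] is n×2n. -/
/-!
Writing `u = ((x, w), y)` and reading vectors as elements of `L²`, the real part of `u* P u` is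
`(τX+ρ)‖x‖² + τW‖w‖² + ρ‖Hw‖² + (2/γ)⟪x, y⟫ + (2/γ)⟪Hw, y⟫ + K‖y‖²` with `K = (2-γ)/(γ²ρ)`.
Splitting `K‖y‖²` into two halves leaves the binary forms `a‖x‖² + 2g⟪x, y⟫ + (K/2)‖y‖²` and
`τW‖Hw‖² + 2g⟪Hw, y⟫ + (K/2)‖y‖²` with `a = τX+ρ`, `g = 1/γ`. They are positive definite since
`g < a`, `g < τW` and `2g < K`, which are the three conditions on `τX, τW, γ, ρ`. What is left over,
`τW (‖w‖² - ‖Hw‖²) + ρ‖Hw‖²`, is nonnegative because `H` is a contraction.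
-/

open scoped Quaternion Matrix RealInnerProductSpace
open Matrix WithLp

section QuadraticForm

variable {E : Type*} [NormedAddCommGroup E] [InnerProductSpace ℝ E]

theorem mul_binaryForm_eq (a g c : ℝ) (x y : E) :
    a * (a * ‖x‖ ^ 2 + 2 * g * ⟪x, y⟫ + c * ‖y‖ ^ 2) =
      ‖a • x + g • y‖ ^ 2 + (a * c - g ^ 2) * ‖y‖ ^ 2 := by
  rw [norm_add_sq_real, norm_smul, norm_smul, inner_smul_left, inner_smul_right,
    Real.norm_eq_abs, Real.norm_eq_abs, mul_pow, mul_pow, sq_abs, sq_abs, conj_trivial]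
  ring

theorem binaryForm_pos {a g c : ℝ} (ha : 0 < a) (hgac : g ^ 2 < a * c) {x y : E}
    (hxy : x ≠ 0 ∨ y ≠ 0) : 0 < a * ‖x‖ ^ 2 + 2 * g * ⟪x, y⟫ + c * ‖y‖ ^ 2 := by
  rcases eq_or_ne y 0 with rfl | hy
  · have hx : x ≠ 0 := by simpa using hxy
    simpa using mul_pos ha (pow_pos (norm_pos_iff.2 hx) 2)
  · refine pos_of_mul_pos_right (a := a) ?_ ha.le
    rw [mul_binaryForm_eq]
    have := mul_pos (sub_pos.2 hgac) (pow_pos (norm_pos_iff.2 hy) 2)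
    positivity

theorem binaryForm_nonneg {a g c : ℝ} (ha : 0 < a) (hgac : g ^ 2 < a * c) (x y : E) :
    0 ≤ a * ‖x‖ ^ 2 + 2 * g * ⟪x, y⟫ + c * ‖y‖ ^ 2 := by
  by_cases hxy : x ≠ 0 ∨ y ≠ 0
  · exact (binaryForm_pos ha hgac hxy).le
  · obtain ⟨rfl, rfl⟩ : x = 0 ∧ y = 0 := by simpa [not_or] using hxy
    simp

theorem ternaryForm_pos {F : Type*} [NormedAddCommGroup F] {a b ρ g k : ℝ} (hg : 0 ≤ g)
    (ha : g < a) (hb : g < b) (hρ : 0 ≤ ρ) (hk : 2 * g < k) {x v y : E} {w : F}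
    (hvw : ‖v‖ ≤ ‖w‖) (hxwy : x ≠ 0 ∨ w ≠ 0 ∨ y ≠ 0) :
    0 < a * ‖x‖ ^ 2 + b * ‖w‖ ^ 2 + ρ * ‖v‖ ^ 2 + 2 * g * ⟪x, y⟫ + 2 * g * ⟪v, y⟫
      + k * ‖y‖ ^ 2 := by
  have hgk : ∀ c, g < c → g ^ 2 < c * (k / 2) := fun c hc => by nlinarith
  have hvw' : b * ‖v‖ ^ 2 ≤ b * ‖w‖ ^ 2 := by gcongr; linarith
  have hsplit : a * ‖x‖ ^ 2 + b * ‖w‖ ^ 2 + ρ * ‖v‖ ^ 2 + 2 * g * ⟪x, y⟫ + 2 * g * ⟪v, y⟫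
      + k * ‖y‖ ^ 2 = (a * ‖x‖ ^ 2 + 2 * g * ⟪x, y⟫ + k / 2 * ‖y‖ ^ 2)
        + (b * ‖v‖ ^ 2 + 2 * g * ⟪v, y⟫ + k / 2 * ‖y‖ ^ 2)
        + (b * ‖w‖ ^ 2 - b * ‖v‖ ^ 2 + ρ * ‖v‖ ^ 2) := by ring
  have hvy := binaryForm_nonneg (by linarith) (hgk b hb) v y
  by_cases hxy : x ≠ 0 ∨ y ≠ 0
  · have hxy := binaryForm_pos (by linarith) (hgk a ha) hxy
    rw [hsplit]
    nlinarith [sq_nonneg ‖v‖]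
  · obtain ⟨rfl, rfl⟩ : x = 0 ∧ y = 0 := by simpa [not_or] using hxy
    have hw : w ≠ 0 := by simpa using hxwy
    simp only [norm_zero, inner_zero_right]
    nlinarith [pow_pos (norm_pos_iff.2 hw) 2, sq_nonneg ‖v‖]

end QuadraticForm

instance Quaternion.instStarModule {R : Type*} [CommRing R] [StarRing R] [TrivialStar R] :
    StarModule R ℍ[R] :=
  ⟨fun r a => by rw [Quaternion.star_smul, star_trivial r]⟩

theorem re_star_dotProduct {ι : Type*} [Fintype ι] (a b : ι → ℍ[ℝ]) :
    (star a ⬝ᵥ b).re = ⟪toLp 2 a, toLp 2 b⟫ := by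
  refine (map_sum (QuaternionAlgebra.reₗ (R := ℝ) (-1) 0 (-1)) _ _).trans
    (Finset.sum_congr rfl fun i _ => ?_)
  change (star (a i) * b i).re = ⟪a i, b i⟫
  simp only [Quaternion.inner_def, Quaternion.re_mul, Quaternion.re_star, Quaternion.imI_star,
    Quaternion.imJ_star, Quaternion.imK_star]
  ring

theorem norm_toLp_fromCols_one_zero_mulVec_le {R m l : Type*} [NormedRing R] [Fintype m]
    [Fintype l] [DecidableEq m] (w : m ⊕ l → R) :
    ‖toLp 2 (fromCols (1 : Matrix m m R) 0 *ᵥ w)‖ ≤ ‖toLp 2 w‖ := by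
  rw [fromCols_mulVec, one_mulVec, zero_mulVec, add_zero]
  refine (pow_le_pow_iff_left₀ (norm_nonneg _) (norm_nonneg _) two_ne_zero).1 ?_
  simp only [PiLp.norm_sq_eq_of_L2, Fintype.sum_sum_type]
  exact le_add_of_nonneg_right (by positivity)

section BlockP

variable {m l : Type*} [Fintype m] [DecidableEq m] [DecidableEq l]

noncomputable def blockP (a b ρ g k : ℝ) (H : Matrix m l ℍ[ℝ]) :
    Matrix ((m ⊕ l) ⊕ m) ((m ⊕ l) ⊕ m) ℍ[ℝ] :=
  fromBlocks (fromBlocks (a • 1) 0 0 (b • 1 + ρ • (Hᴴ * H)))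
    (fromRows (g • 1) (g • Hᴴ)) (fromCols (g • 1) (g • H)) (k • 1)

theorem blockP_isHermitian (a b ρ g k : ℝ) (H : Matrix m l ℍ[ℝ]) :
    (blockP a b ρ g k H).IsHermitian := by
  have hsmul_one : ∀ r : ℝ, (r • (1 : Matrix m m ℍ[ℝ])).IsHermitian := fun r =>
    isHermitian_one.smul (IsSelfAdjoint.all r)
  refine .fromBlocks (.fromBlocks (hsmul_one a) conjTranspose_zero ?_) ?_ (hsmul_one k)
  · exact (isHermitian_one.smul (IsSelfAdjoint.all b)).add
      ((isHermitian_conjTranspose_mul_self H).smul (IsSelfAdjoint.all ρ))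
  · simp [conjTranspose_fromRows_eq_fromCols_conjTranspose]

theorem re_star_dotProduct_blockP_mulVec [Fintype l] (a b ρ g k : ℝ) (H : Matrix m l ℍ[ℝ])
    (x : m → ℍ[ℝ]) (w : l → ℍ[ℝ]) (y : m → ℍ[ℝ]) :
    (star (Sum.elim (Sum.elim x w) y) ⬝ᵥ blockP a b ρ g k H *ᵥ Sum.elim (Sum.elim x w) y).re =
      a * ‖toLp 2 x‖ ^ 2 + b * ‖toLp 2 w‖ ^ 2 + ρ * ‖toLp 2 (H *ᵥ w)‖ ^ 2
        + 2 * g * ⟪toLp 2 x, toLp 2 y⟫ + 2 * g * ⟪toLp 2 (H *ᵥ w), toLp 2 y⟫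
        + k * ‖toLp 2 y‖ ^ 2 := by
  simp only [blockP, fromBlocks_mulVec, Sum.elim_comp_inl, Sum.elim_comp_inr, fromRows_mulVec,
    fromCols_mulVec_sumElim, Function.star_sumElim, sumElim_dotProduct_sumElim, smul_mulVec,
    one_mulVec, add_mulVec, zero_mulVec, ← mulVec_mulVec, dotProduct_add, dotProduct_smul,
    add_zero, zero_add]
  rw [dotProduct_mulVec (star w), dotProduct_mulVec (star w), ← star_mulVec]
  simp only [Quaternion.re_add, Quaternion.re_smul, smul_eq_mul, re_star_dotProduct,
    ← real_inner_self_eq_norm_sq, real_inner_comm (toLp 2 y)]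
  ring

end BlockP

theorem P_posDef_general {n : ℕ} (τX τW γ ρ : ℝ)
    (hγ : 0 < γ) (hρ : 0 < ρ)
    (h1 : 1 < γ * (τX + ρ)) (h2 : 1 < γ * τW) (h3 : 0 < 2 - γ - 2 * γ * ρ)
    (H : Matrix (Fin n) (Fin n ⊕ Fin n) ℍ[ℝ])
    (hH : H = Matrix.fromCols (1 : Matrix (Fin n) (Fin n) ℍ[ℝ]) 0)
    (P : Matrix ((Fin n ⊕ (Fin n ⊕ Fin n)) ⊕ Fin n)
        ((Fin n ⊕ (Fin n ⊕ Fin n)) ⊕ Fin n) ℍ[ℝ])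
    (hP : P = Matrix.fromBlocks
      (Matrix.fromBlocks ((τX + ρ) • (1 : Matrix (Fin n) (Fin n) ℍ[ℝ])) 0 0
        (τW • (1 : Matrix (Fin n ⊕ Fin n) (Fin n ⊕ Fin n) ℍ[ℝ]) + ρ • (Hᴴ * H)))
      (Matrix.fromRows ((1 / γ) • (1 : Matrix (Fin n) (Fin n) ℍ[ℝ])) ((1 / γ) • Hᴴ))
      (Matrix.fromCols ((1 / γ) • (1 : Matrix (Fin n) (Fin n) ℍ[ℝ])) ((1 / γ) • H))
      (((2 - γ) / (γ ^ 2 * ρ)) • (1 : Matrix (Fin n) (Fin n) ℍ[ℝ]))) :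
    Pᴴ = P ∧
    ∀ u : (Fin n ⊕ (Fin n ⊕ Fin n)) ⊕ Fin n → ℍ[ℝ],
      u ≠ 0 → 0 < (star u ⬝ᵥ P.mulVec u).re := by
  obtain rfl : P = blockP (τX + ρ) τW ρ (1 / γ) ((2 - γ) / (γ ^ 2 * ρ)) H := hP
  refine ⟨blockP_isHermitian _ _ _ _ _ H, fun u hu => ?_⟩
  obtain ⟨x, w, y, rfl⟩ : ∃ x w y, u = Sum.elim (Sum.elim x w) y :=
    ⟨_, _, _, by rw [Sum.elim_comp_inl_inr, Sum.elim_comp_inl_inr]⟩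
  rw [re_star_dotProduct_blockP_mulVec]
  refine ternaryForm_pos (by positivity) ?_ ?_ hρ.le ?_
    (hH ▸ norm_toLp_fromCols_one_zero_mulVec_le w) ?_
  · rwa [one_div, inv_lt_iff_one_lt_mul₀ hγ, mul_comm]
  · rwa [one_div, inv_lt_iff_one_lt_mul₀ hγ, mul_comm]
  · rw [lt_div_iff₀ (by positivity)]
    field_simp
    linarith
  · contrapose! hu
    simp_all

/-- Positive definiteness of the block matrix `P`: if positive reals
`τ_X, τ_W, γ, ρ` satisfy `γ(τ_X+ρ) > 1`, `γ τ_W > 1` and `2 − γ − 2γρ > 0`,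
then the Hermitian quaternion block matrix
`P = [[(τ_X+ρ)I, 0, (1/γ)I], [0, τ_W I + ρ H*H, (1/γ)H*], [(1/γ)I, (1/γ)H, ((2−γ)/(γ²ρ))I]]`
with `H = [I_n, O]` is positive definite. -/
theorem P_posDef {n : ℕ} (τX τW γ ρ : ℝ)
    (hτX : 0 < τX) (hτW : 0 < τW) (hγ : 0 < γ) (hρ : 0 < ρ)
    (h1 : 1 < γ * (τX + ρ)) (h2 : 1 < γ * τW) (h3 : 0 < 2 - γ - 2 * γ * ρ)
    (H : Matrix (Fin n) (Fin n ⊕ Fin n) ℍ[ℝ])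
    (hH : H = Matrix.fromCols (1 : Matrix (Fin n) (Fin n) ℍ[ℝ]) 0)
    (P : Matrix ((Fin n ⊕ (Fin n ⊕ Fin n)) ⊕ Fin n)
        ((Fin n ⊕ (Fin n ⊕ Fin n)) ⊕ Fin n) ℍ[ℝ])
    (hP : P = Matrix.fromBlocks
      (Matrix.fromBlocks ((τX + ρ) • (1 : Matrix (Fin n) (Fin n) ℍ[ℝ])) 0 0
        (τW • (1 : Matrix (Fin n ⊕ Fin n) (Fin n ⊕ Fin n) ℍ[ℝ]) + ρ • (Hᴴ * H)))
      (Matrix.fromRows ((1 / γ) • (1 : Matrix (Fin n) (Fin n) ℍ[ℝ])) ((1 / γ) • Hᴴ))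
      (Matrix.fromCols ((1 / γ) • (1 : Matrix (Fin n) (Fin n) ℍ[ℝ])) ((1 / γ) • H))
      (((2 - γ) / (γ ^ 2 * ρ)) • (1 : Matrix (Fin n) (Fin n) ℍ[ℝ]))) :
    Pᴴ = P ∧
    ∀ u : (Fin n ⊕ (Fin n ⊕ Fin n)) ⊕ Fin n → ℍ[ℝ],
      u ≠ 0 → 0 < (star u ⬝ᵥ P.mulVec u).re :=
  P_posDef_general τX τW γ ρ hγ hρ h1 h2 h3 H hH P hP
end
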